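/- arXiv:1908.09125 — 3 statements merged into one kernel-verified Lean document; each statement's English description precedes it below -/
import Mathlib

section
/- Let w be a word over a finite ordered alphabet Σ. Then w is the Burrows–Wheeler transform of a primitive word if and only if the standard permutation σ_w of w is cyclic. -/
namespace DollarBWT

/-- The list of all rotations of a word. -/
def rotations {α : Type*} (v : List α) : List (List α) :=
  (List.range v.length).map fun k => v.rotate k

/-- The Burrows–Wheeler transform of a word `v`: sort (stably) the multiset of all
rotations of `v` lexicographically and take the last character of each rotation. -/
def bwt {α : Type*} [LinearOrder α] (v : List α) : List α :=
  ((rotations v).insertionSort (· ≤ ·)).filterMap List.getLast?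

/-- `dol w i` inserts the sentinel `⊥` (playing the role of `$`, smaller than every
letter of the alphabet) at (1-based) position `i` of the word `w`. -/
def dol {α : Type*} [LinearOrder α] (w : List α) (i : ℕ) : List (WithBot α) :=
  (w.map (fun a => (a : WithBot α))).insertIdx (i - 1) ⊥

/-- Position `i` (1-based, `1 ≤ i ≤ |w|+1`) is *nice* for `w` if there is a word `v`
of the same length as `w` with `BWT(v$) = dol(w,i)`. -/
def Nice {α : Type*} [LinearOrder α] (w : List α) (i : ℕ) : Prop :=
  ∃ v : List α, v.length = w.length ∧
    bwt (v.map (fun a => (a : WithBot α)) ++ [(⊥ : WithBot α)]) = dol w i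

/-- `σ` (a permutation of `Fin n`, thought of as the positions `1,…,n` of `w`) is the
standard permutation of the word `w`. -/
def IsStdPerm {α : Type*} [LinearOrder α] {n : ℕ} (w : List α)
    (σ : Equiv.Perm (Fin n)) : Prop :=
  ∃ h : w.length = n, ∀ i j : Fin n,
    σ i < σ j ↔ (w.get (Fin.cast h.symm i) < w.get (Fin.cast h.symm j)
      ∨ (w.get (Fin.cast h.symm i) = w.get (Fin.cast h.symm j) ∧ i < j))

/-- Application of a permutation of `Fin n` in 1-based terms: `ap σ k` is the image of
`k ∈ {1,…,n}` under `σ` read as a permutation of `{1,…,n}` (junk: `k` outside). -/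
def ap {n : ℕ} (σ : Equiv.Perm (Fin n)) (k : ℕ) : ℕ :=
  if h : 1 ≤ k ∧ k ≤ n then ((σ ⟨k - 1, by omega⟩ : Fin n) : ℕ) + 1 else k

/-- `C` is a cycle of the permutation `σ`: a minimal non-empty subset with `σ(C) = C`. -/
def IsCycleOf {β : Type*} (σ : Equiv.Perm β) (C : Set β) : Prop :=
  C.Nonempty ∧ σ '' C = C ∧ ∀ D : Set β, D.Nonempty → D ⊆ C → σ '' D = D → D = C

/-- The number of cycles in the cycle decomposition of `σ` (fixpoints count as cycles). -/
noncomputable def numCycles {β : Type*} (σ : Equiv.Perm β) : ℕ :=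
  {C : Set β | IsCycleOf σ C}.ncard

/-- A permutation is cyclic if its cycle decomposition consists of a single cycle,
i.e. the whole domain is one cycle. -/
def PermCyclic {β : Type*} (σ : Equiv.Perm β) : Prop :=
  IsCycleOf σ (Set.univ : Set β)

/-- `C ⊆ {1,…,n}` (in 1-based terms) is a cycle of `σ`. -/
def IsCycleSet1 {n : ℕ} (σ : Equiv.Perm (Fin n)) (C : Set ℕ) : Prop :=
  ∃ C' : Set (Fin n), IsCycleOf σ C' ∧ C = (fun x : Fin n => (x : ℕ) + 1) '' C'

/-- A word is primitive if it is not a proper power. -/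
def Primitive {α : Type*} (v : List α) : Prop :=
  ∀ (u : List α) (k : ℕ), v = (List.replicate k u).flatten → k = 1

/-- `σ` equals the product of the cycles given (in 1-based terms) by the lists in `Ls`:
the lists are disjoint, consist of elements of `{1,…,n}`, `σ` maps each entry of each
list to the (cyclically) next one, and fixes everything else. -/
def IsCyclesProd {n : ℕ} (σ : Equiv.Perm (Fin n)) (Ls : List (List ℕ)) : Prop :=
  Ls.flatten.Nodup ∧ (∀ L ∈ Ls, L ≠ []) ∧ (∀ x ∈ Ls.flatten, 1 ≤ x ∧ x ≤ n) ∧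
  (∀ L ∈ Ls, ∀ (t : ℕ) (ht : t < L.length),
      ap σ (L.get ⟨t, ht⟩) = L.get ⟨(t + 1) % L.length, Nat.mod_lt _ (by omega)⟩) ∧
  (∀ x : ℕ, 1 ≤ x → x ≤ n → x ∉ Ls.flatten → ap σ x = x)

/-- `S ⊆ {1,…,n}` (1-based) is a pseudo-cycle of `σ` witnessed by the partition
`S = Sl ∪ Sr` with `Sl < Sr` and `σ(S) = (Sl − 1) ∪ Sr`. -/
def IsPseudoCycleWith {n : ℕ} (σ : Equiv.Perm (Fin n)) (S Sl Sr : Set ℕ) : Prop :=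
  S.Nonempty ∧ S ⊆ Set.Icc 1 n ∧ Sl ∪ Sr = S ∧ Disjoint Sl Sr ∧
    (∀ x ∈ Sl, ∀ y ∈ Sr, x < y) ∧
    ap σ '' S = ((fun x => x - 1) '' Sl) ∪ Sr

/-- The critical interval `[a+1, b]` of a pseudo-cycle with partition `Sl, Sr`,
where `a = max Sl` (`0` if `Sl = ∅`) and `b = min Sr` (`n+1` if `Sr = ∅`). -/
noncomputable def criticalInterval (n : ℕ) (Sl Sr : Set ℕ) : Set ℕ :=
  Set.Icc (sSup Sl + 1) (sInf (insert (n + 1) Sr))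

/-- `unshift(U, i) = { x ∈ U : x < i } ∪ { x − 1 : x ∈ U, x > i }`. -/
def unshift (U : Set ℕ) (i : ℕ) : Set ℕ :=
  {x | x ∈ U ∧ x < i} ∪ (fun x => x - 1) '' {x | x ∈ U ∧ i < x}

/-- The number of nice positions of `w`. -/
noncomputable def niceCount {α : Type*} [LinearOrder α] (w : List α) : ℕ :=
  {i : ℕ | 1 ≤ i ∧ i ≤ w.length + 1 ∧ Nice w i}.ncard

/-- `L`, the maximum over all cycles `C` of `σ` of the (1-based) minimum of `C`. -/
noncomputable def Lval {n : ℕ} (σ : Equiv.Perm (Fin n)) : ℕ :=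
  sSup ((fun C : Set (Fin n) => sInf ((fun x : Fin n => (x : ℕ) + 1) '' C)) ''
    {C | IsCycleOf σ C})

/-- The number of bad pairs of `σ`: cycles `C` which are not the cycle with the largest
minimum and such that `min C + 1 ∈ C` (all in 1-based terms). -/
noncomputable def badPairCount {n : ℕ} (σ : Equiv.Perm (Fin n)) : ℕ :=
  {C : Set (Fin n) | IsCycleOf σ C ∧
    sInf ((fun x : Fin n => (x : ℕ) + 1) '' C) < Lval σ ∧
    sInf ((fun x : Fin n => (x : ℕ) + 1) '' C) + 1 ∈
      (fun x : Fin n => (x : ℕ) + 1) '' C}.ncard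


/-!
Let `r t` be the row of the rotation `v.rotate t` in the sorted matrix of rotations of a
primitive word `v`. Writing `v.rotate t = a :: u`, the next rotation is `u ++ [a]`: row
`r (t + 1)` ends with the letter `a` that starts row `r t`, and comparing two rotations means
comparing their first letters and then the next rotations. This is the recursion that
characterises the standard permutation of `w = BWT(v)`, so `σ_w (r (t + 1)) = r t` and `σ_w`
runs through all rows in a single cycle.

Conversely, if `σ_w` is cyclic, enumerate the positions as `r t = σ_w⁻ᵗ z` and read the word
`v` off `w` along this enumeration. The same recursion shows that `r` ranks the rotations of `v`: a
pair with `r s < r t` but `v.rotate t ≤ v.rotate s` stays such after every shift, which fails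
once `r (s + k)` is the last position. Hence the rotations of `v` are distinct, `v` is primitive,
and its sorted rotations end with the letters of `w`.
-/

section Lists

variable {α : Type*}

theorem getElem?_filterMap_of_isSome {β : Type*} {f : α → Option β} :
    ∀ {L : List α}, (∀ x ∈ L, (f x).isSome) →
      ∀ i : ℕ, (L.filterMap f)[i]? = L[i]?.bind f
  | [], _, _ => by simp
  | x :: L, h, i => by
    obtain ⟨y, hy⟩ := Option.isSome_iff_exists.1 (h x List.mem_cons_self)
    have ih := getElem?_filterMap_of_isSome (fun z hz => h z (List.mem_cons_of_mem x hz))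
    cases i <;> simp [hy, ih]

theorem length_filterMap_of_isSome {β : Type*} {f : α → Option β} {L : List α}
    (h : ∀ x ∈ L, (f x).isSome) : (L.filterMap f).length = L.length := by
  rw [List.length_filterMap_eq_countP, List.countP_eq_length]
  simpa using h

theorem append_singleton_lt_append_singleton_iff [LinearOrder α] (a : α) :
    ∀ {l m : List α}, l.length = m.length → (l ++ [a] < m ++ [a] ↔ l < m)
  | [], [], _ => by simp
  | b :: l, c :: m, h => by
    simp only [List.cons_append, List.cons_lt_cons_iff,
      append_singleton_lt_append_singleton_iff a (l := l) (m := m) (by simpa using h)]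

theorem rotate_succ_of_rotate_eq_cons {v l : List α} {a : α} {t : ℕ}
    (h : v.rotate t = a :: l) : v.rotate (t + 1) = l ++ [a] := by
  rw [← List.rotate_rotate, h, List.rotate_cons_succ, List.rotate_zero]

theorem getLast?_rotate_succ (v : List α) (t : ℕ) :
    (v.rotate (t + 1)).getLast? = (v.rotate t).head? := by
  cases h : v.rotate t with
  | nil => rw [List.rotate_eq_nil_iff] at h; simp [h]
  | cons a l => simp [rotate_succ_of_rotate_eq_cons h]

theorem rotate_lt_rotate_iff [LinearOrder α] {v : List α} {s t : ℕ} {a b : α}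
    (ha : (v.rotate s).head? = some a) (hb : (v.rotate t).head? = some b) :
    v.rotate s < v.rotate t ↔ a < b ∨ a = b ∧ v.rotate (s + 1) < v.rotate (t + 1) := by
  obtain ⟨l, hl⟩ := List.head?_eq_some_iff.1 ha
  obtain ⟨m, hm⟩ := List.head?_eq_some_iff.1 hb
  have hlen : l.length = m.length := by
    have hs := congrArg List.length hl
    have ht := congrArg List.length hm
    simp only [List.length_rotate, List.length_cons] at hs ht
    omega
  rw [rotate_succ_of_rotate_eq_cons hl, rotate_succ_of_rotate_eq_cons hm, hl, hm,
    List.cons_lt_cons_iff]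
  refine or_congr_right (and_congr_right fun hab => ?_)
  subst hab
  exact (append_singleton_lt_append_singleton_iff a hlen).symm

theorem length_rotations (v : List α) : (rotations v).length = v.length := by
  simp [rotations]

theorem mem_rotations {v x : List α} : x ∈ rotations v ↔ ∃ t < v.length, v.rotate t = x := by
  simp [rotations]

theorem rotate_mem_rotations {v : List α} (hv : v ≠ []) (t : ℕ) : v.rotate t ∈ rotations v :=
  mem_rotations.2 ⟨t % v.length, Nat.mod_lt _ (List.length_pos_iff.2 hv), List.rotate_mod v t⟩

end Lists

section Primitive

variable {α : Type*}

theorem Primitive.ne_nil {v : List α} (hv : Primitive v) : v ≠ [] := by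
  rintro rfl
  exact absurd (hv [] 0 rfl) (by omega)

theorem rotate_mul_eq_self {v : List α} {d : ℕ} (h : v.rotate d = v) (m : ℕ) :
    v.rotate (d * m) = v := by
  induction m with
  | zero => simp
  | succ m ih => rw [Nat.mul_succ, ← List.rotate_rotate, ih, h]

theorem take_mul_eq_flatten_replicate {v : List α} {g : ℕ} (h : v.rotate g = v) :
    ∀ j, j * g ≤ v.length → v.take (j * g) = (List.replicate j (v.take g)).flatten
  | 0, _ => by simp
  | j + 1, hj => by
    rw [Nat.succ_mul] at hj ⊢
    have hdrop : (v.drop (j * g)).take g = v.take g := by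
      conv_rhs => rw [← rotate_mul_eq_self h j, Nat.mul_comm,
        List.rotate_eq_drop_append_take (by omega)]
      rw [List.take_append_of_le_length (by simp; omega)]
    rw [List.take_add, take_mul_eq_flatten_replicate h j (by omega), hdrop,
      List.replicate_succ', List.flatten_append, List.flatten_singleton]

theorem eq_flatten_replicate_of_rotate_eq_self {v : List α} {g : ℕ} (h : v.rotate g = v)
    (hg : g ∣ v.length) : v = (List.replicate (v.length / g) (v.take g)).flatten := by
  have := take_mul_eq_flatten_replicate h (v.length / g) (Nat.div_mul_cancel hg).le
  rwa [Nat.div_mul_cancel hg, List.take_length] at this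

/-- A proper period `d` of the rotation forces the period `gcd d |v|`, which divides `|v|`. -/
theorem Primitive.rotate_ne_self {v : List α} (hv : Primitive v) {d : ℕ} (hd : 0 < d)
    (hdv : d < v.length) : v.rotate d ≠ v := by
  intro h
  have hg : Nat.gcd d v.length < v.length := (Nat.gcd_le_left _ hd).trans_lt hdv
  obtain ⟨m, -, hm⟩ := Nat.exists_mul_mod_eq_gcd hg
  have hrot : v.rotate (Nat.gcd d v.length) = v := by
    rw [← hm, List.rotate_mod, rotate_mul_eq_self h]
  have hdvd := Nat.gcd_dvd_right d v.length
  have hk := hv _ _ (eq_flatten_replicate_of_rotate_eq_self hrot hdvd)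
  have := Nat.div_mul_cancel hdvd
  rw [hk, one_mul] at this
  omega

theorem Primitive.nodup_rotations {v : List α} (hv : Primitive v) : (rotations v).Nodup := by
  refine List.Nodup.map_on (fun a ha b hb hab => ?_) List.nodup_range
  rw [List.mem_range] at ha hb
  wlog hle : a ≤ b generalizing a b
  · exact (this b hb a ha hab.symm (by omega)).symm
  by_contra hne
  refine hv.rotate_ne_self (d := b - a) (by omega) (by omega) ?_
  have := congrArg (·.rotate (v.length - a)) hab
  simp only [List.rotate_rotate] at this
  rwa [Nat.add_sub_cancel' ha.le, List.rotate_length, ← List.rotate_mod,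
    show b + (v.length - a) = b - a + v.length by omega, Nat.add_mod_right,
    List.rotate_mod, eq_comm] at this

theorem primitive_of_nodup_rotations {v : List α} (hv : v ≠ []) (hnd : (rotations v).Nodup) :
    Primitive v := by
  rintro u (_ | _ | k) rfl
  · simp at hv
  · rfl
  · have hu : 0 < u.length := List.length_pos_iff.2 (by rintro rfl; simp at hv)
    have hrot : (List.replicate (k + 2) u).flatten.rotate u.length =
        (List.replicate (k + 2) u).flatten := by
      conv_lhs => rw [List.replicate_succ, List.flatten_cons, List.rotate_append_length_eq]
      rw [List.replicate_succ' (n := k + 1), List.flatten_append, List.flatten_singleton]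
    have hlt : u.length < (List.replicate (k + 2) u).flatten.length := by
      simp only [List.length_flatten, List.map_replicate, List.sum_replicate, smul_eq_mul]
      nlinarith
    exact absurd (List.inj_on_of_nodup_map hnd (List.mem_range.2 hlt)
      (List.mem_range.2 (hu.trans hlt)) (hrot.trans (List.rotate_zero _).symm)) hu.ne'

end Primitive

section Permutations

theorem eq_iff_eq_of_forall_lt_iff_lt {ι β γ : Type*} [LinearOrder β] [LinearOrder γ]
    {a : ι → β} {b : ι → γ} (h : ∀ s t, a s < a t ↔ b s < b t) (s t : ι) :
    a s = a t ↔ b s = b t := by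
  simp only [le_antisymm_iff, ← not_lt, h]

theorem eq_of_forall_lt_iff_lt {ι β : Type*} [LinearOrder β] [Finite β] {a b : ι → β}
    (hb : Function.Surjective b) (h : ∀ s t, a s < a t ↔ b s < b t) : a = b := by
  have hmono : StrictMono (a ∘ Function.surjInv hb) := fun i j hij =>
    (h _ _).2 (by simpa only [Function.surjInv_eq] using hij)
  funext t
  rw [(eq_iff_eq_of_forall_lt_iff_lt h _ _).2 (Function.surjInv_eq hb (b t)).symm]
  exact hmono.apply_eq

variable {β : Type*} {σ : Equiv.Perm β}

theorem permCyclic_of_apply_succ {r : ℕ → β} (hr : Function.Surjective r)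
    (h : ∀ t, σ (r (t + 1)) = r t) : PermCyclic σ := by
  refine ⟨⟨r 0, trivial⟩, Set.image_univ_of_surjective σ.surjective,
    fun D ⟨x, hx⟩ _ hD => ?_⟩
  have hσD : ∀ y, σ y ∈ D ↔ y ∈ D := fun y => by
    simpa only [hD] using σ.injective.mem_set_image (s := D) (a := y)
  have hmem : ∀ t, r t ∈ D ↔ r 0 ∈ D := by
    intro t
    induction t with
    | zero => rfl
    | succ t ih => rw [← ih, ← h t, hσD]
  obtain ⟨s, rfl⟩ := hr x
  refine Set.eq_univ_of_forall fun y => ?_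
  obtain ⟨t, rfl⟩ := hr y
  exact (hmem t).2 ((hmem s).1 hx)

theorem PermCyclic.isCycleOn_univ (h : PermCyclic σ) : σ.IsCycleOn Set.univ := by
  refine ⟨σ.bijective.bijOn_univ, fun x _ y _ => ?_⟩
  have hD : σ '' {y | σ.SameCycle x y} = {y | σ.SameCycle x y} := by
    ext y
    simp [Equiv.image_eq_preimage_symm, Equiv.Perm.sameCycle_symm_apply_right]
  have := h.2.2 _ ⟨x, Equiv.Perm.SameCycle.refl σ x⟩ (Set.subset_univ _) hD
  exact (Set.eq_univ_iff_forall.1 this) y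

end Permutations

section RotationRank

variable {α : Type*} [LinearOrder α]

def bwtMatrix (v : List α) : List (List α) :=
  (rotations v).insertionSort (· ≤ ·)

theorem bwt_eq_filterMap (v : List α) : bwt v = (bwtMatrix v).filterMap List.getLast? := rfl

theorem isSome_getLast?_of_mem_bwtMatrix {v x : List α} (hv : v ≠ []) (hx : x ∈ bwtMatrix v) :
    x.getLast?.isSome := by
  obtain ⟨t, -, rfl⟩ := mem_rotations.1 ((List.perm_insertionSort _ _).mem_iff.1 hx)
  simpa using hv

theorem length_bwt (v : List α) : (bwt v).length = v.length := by
  rcases eq_or_ne v [] with rfl | hv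
  · rfl
  · rw [bwt_eq_filterMap,
      length_filterMap_of_isSome fun x hx => isSome_getLast?_of_mem_bwtMatrix hv hx,
      bwtMatrix, List.length_insertionSort, length_rotations]

structure IsRotationRank {n : ℕ} (v : List α) (r : ℕ → Fin n) : Prop where
  length_eq : v.length = n
  surjective : Function.Surjective r
  lt_iff_lt : ∀ s t, r s < r t ↔ v.rotate s < v.rotate t

namespace IsRotationRank

variable {n : ℕ} {v : List α} {r : ℕ → Fin n}

theorem ne_nil (h : IsRotationRank v r) : v ≠ [] :=
  List.length_pos_iff.1 (h.length_eq ▸ (r 0).pos)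

theorem eq_iff_eq (h : IsRotationRank v r) (s t : ℕ) : r s = r t ↔ v.rotate s = v.rotate t :=
  eq_iff_eq_of_forall_lt_iff_lt h.lt_iff_lt s t

theorem sortedLT_ofFn (h : IsRotationRank v r) :
    (List.ofFn fun i => v.rotate (Function.surjInv h.surjective i)).SortedLT :=
  List.sortedLT_ofFn_iff.2 fun i j hij =>
    (h.lt_iff_lt _ _).1 (by simpa only [Function.surjInv_eq] using hij)

theorem bwtMatrix_eq (h : IsRotationRank v r) :
    bwtMatrix v = List.ofFn fun i => v.rotate (Function.surjInv h.surjective i) := by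
  have hsub : (List.ofFn fun i => v.rotate (Function.surjInv h.surjective i)) ⊆ rotations v := by
    intro x hx
    obtain ⟨i, rfl⟩ := List.mem_ofFn.1 hx
    exact rotate_mem_rotations h.ne_nil _
  have hperm := (List.subperm_of_subset h.sortedLT_ofFn.nodup hsub).perm_of_length_le
    (by simp [length_rotations, h.length_eq])
  exact ((List.perm_insertionSort _ _).trans hperm.symm).eq_of_sortedLE
    List.sortedLE_insertionSort h.sortedLT_ofFn.sortedLE

theorem primitive (h : IsRotationRank v r) : Primitive v := by
  refine primitive_of_nodup_rotations h.ne_nil ?_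
  rw [← (List.perm_insertionSort (· ≤ ·) (rotations v)).nodup_iff, ← bwtMatrix,
    h.bwtMatrix_eq]
  exact h.sortedLT_ofFn.nodup

theorem getElem?_bwtMatrix (h : IsRotationRank v r) (t : ℕ) :
    (bwtMatrix v)[(r t : ℕ)]? = some (v.rotate t) := by
  rw [h.bwtMatrix_eq, List.getElem?_ofFn, dif_pos (r t).isLt, Fin.eta,
    (h.eq_iff_eq _ _).1 (Function.surjInv_eq h.surjective (r t))]

theorem getElem?_bwt (h : IsRotationRank v r) (t : ℕ) :
    (bwt v)[(r t : ℕ)]? = (v.rotate t).getLast? := by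
  rw [bwt_eq_filterMap,
    getElem?_filterMap_of_isSome (fun x hx => isSome_getLast?_of_mem_bwtMatrix h.ne_nil hx),
    h.getElem?_bwtMatrix]
  rfl

end IsRotationRank

theorem Primitive.exists_isRotationRank {v : List α} (hv : Primitive v) {n : ℕ}
    (hn : v.length = n) : ∃ r : ℕ → Fin n, IsRotationRank v r := by
  subst hn
  have hperm := List.perm_insertionSort (· ≤ ·) (rotations v)
  have hM : (bwtMatrix v).SortedLT :=
    List.sortedLE_insertionSort.sortedLT_of_nodup (hperm.nodup_iff.2 hv.nodup_rotations)
  have hlen : (bwtMatrix v).length = v.length := by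
    rw [bwtMatrix, List.length_insertionSort, length_rotations]
  have hmem (t : ℕ) : v.rotate t ∈ bwtMatrix v :=
    hperm.mem_iff.2 (rotate_mem_rotations hv.ne_nil t)
  let r (t : ℕ) : Fin v.length :=
    ⟨(bwtMatrix v).idxOf (v.rotate t), (List.idxOf_lt_length_of_mem (hmem t)).trans_eq hlen⟩
  have hidx (t : ℕ) : (r t : ℕ) < (bwtMatrix v).length := (r t).isLt.trans_eq hlen.symm
  have hr (t : ℕ) : (bwtMatrix v)[(r t : ℕ)]'(hidx t) = v.rotate t := List.getElem_idxOf _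
  refine ⟨r, rfl, fun i => ?_, fun s t => ?_⟩
  · have hi : (i : ℕ) < (bwtMatrix v).length := i.isLt.trans_eq hlen.symm
    obtain ⟨t, -, ht⟩ := mem_rotations.1 (hperm.mem_iff.1 (List.getElem_mem hi))
    exact ⟨t, Fin.ext (by simp only [r, ht, hM.nodup.idxOf_getElem])⟩
  · rw [Fin.lt_def, ← hM.getElem_lt_getElem_iff (hi := hidx s) (hj := hidx t), hr, hr]

end RotationRank

section StandardPermutation

variable {α : Type*} [LinearOrder α]

theorem IsStdPerm.lt_iff {w : List α} {σ : Equiv.Perm (Fin w.length)} (hσ : IsStdPerm w σ)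
    (i j : Fin w.length) : σ i < σ j ↔ w.get i < w.get j ∨ w.get i = w.get j ∧ i < j := by
  obtain ⟨_, h⟩ := hσ
  simpa only [Fin.cast_eq_self] using h i j

theorem Primitive.permCyclic_of_isStdPerm_bwt {v : List α} (hv : Primitive v)
    {σ : Equiv.Perm (Fin (bwt v).length)} (hσ : IsStdPerm (bwt v) σ) : PermCyclic σ := by
  obtain ⟨r, hr⟩ := hv.exists_isRotationRank (length_bwt v).symm
  have hhead (t : ℕ) : (v.rotate t).head? = some ((bwt v).get (r (t + 1))) := by
    rw [← getLast?_rotate_succ, ← hr.getElem?_bwt, List.get_eq_getElem,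
      List.getElem?_eq_getElem]
  refine permCyclic_of_apply_succ hr.surjective
    (congrFun (eq_of_forall_lt_iff_lt hr.surjective fun s t => ?_))
  rw [hσ.lt_iff, hr.lt_iff_lt, hr.lt_iff_lt s t, rotate_lt_rotate_iff (hhead s) (hhead t)]

theorem IsRotationRank.of_lt_iff {v : List α} {n : ℕ} (hv : v.length = n) {r : ℕ → Fin n}
    {a : ℕ → α} (hrecur : ∀ s i, ∃ k, r (s + k) = i)
    (hper : ∀ s t, r s = r t → s ≡ t [MOD n])
    (ha : ∀ t, (v.rotate t).head? = some (a t))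
    (hr : ∀ s t, r s < r t ↔ a s < a t ∨ a s = a t ∧ r (s + 1) < r (t + 1)) :
    IsRotationRank v r := by
  subst hv
  have hlt (s t : ℕ) (hst : r s < r t) : v.rotate s < v.rotate t := by
    by_contra hnot
    have hbad (k : ℕ) : r (s + k) < r (t + k) ∧ ¬v.rotate (s + k) < v.rotate (t + k) := by
      induction k with
      | zero => exact ⟨hst, hnot⟩
      | succ k ih =>
        obtain ⟨hlt, hnlt⟩ := ih
        rw [rotate_lt_rotate_iff (ha _) (ha _), not_or, not_and] at hnlt
        rcases (hr _ _).1 hlt with h | ⟨heq, h⟩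
        · exact absurd h hnlt.1
        · exact ⟨h, hnlt.2 heq⟩
    obtain ⟨k, hk⟩ := hrecur s ⟨v.length - 1, by have := (r 0).isLt; omega⟩
    have hmax := (hbad k).1
    rw [hk, Fin.lt_def] at hmax
    have := (r (t + k)).isLt
    simp only at hmax
    omega
  refine ⟨rfl, fun i => ?_, fun s t => ⟨hlt s t, fun h => ?_⟩⟩
  · obtain ⟨k, hk⟩ := hrecur 0 i
    exact ⟨0 + k, hk⟩
  · rcases lt_trichotomy (r s) (r t) with hst | hst | hst
    · exact hst
    · rw [← List.rotate_mod, (hper s t hst : s % v.length = t % v.length), List.rotate_mod] at h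
      exact absurd h (lt_irrefl _)
    · exact absurd (hlt t s hst) (lt_asymm h)

theorem IsStdPerm.exists_primitive_bwt_eq_of_permCyclic {w : List α}
    {σ : Equiv.Perm (Fin w.length)} (hσ : IsStdPerm w σ) (hc : PermCyclic σ) :
    ∃ v, Primitive v ∧ bwt v = w := by
  obtain ⟨z, -⟩ := hc.1
  have hcyc : σ⁻¹.IsCycleOn ((Finset.univ : Finset (Fin w.length)) : Set (Fin w.length)) := by
    rw [Finset.coe_univ]
    exact hc.isCycleOn_univ.inv
  let r (t : ℕ) : Fin w.length := (σ⁻¹ ^ t) z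
  have hσr (t : ℕ) : σ (r (t + 1)) = r t := by
    simp only [r, pow_succ', Equiv.Perm.mul_apply, Equiv.Perm.inv_def, Equiv.apply_symm_apply]
  have hmod (s t : ℕ) : r s = r t ↔ s ≡ t [MOD w.length] := by
    have := hcyc.pow_apply_eq_pow_apply (Finset.mem_univ z) (m := s) (n := t)
    rwa [Finset.card_univ, Fintype.card_fin] at this
  have hrecur (s : ℕ) (i : Fin w.length) : ∃ k, r (s + k) = i := by
    obtain ⟨k, -, hk⟩ := hcyc.exists_pow_eq (Finset.mem_univ (r s)) (Finset.mem_univ i)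
    refine ⟨k, ?_⟩
    rw [← hk, add_comm]
    show (σ⁻¹ ^ (k + s)) z = _
    rw [pow_add, Equiv.Perm.mul_apply]
  let v := List.ofFn fun k : Fin w.length => w.get (r (k + 1))
  have hv : v.length = w.length := List.length_ofFn
  have ha (t : ℕ) : (v.rotate t).head? = some (w.get (r (t + 1))) := by
    have ht : t % v.length < v.length := Nat.mod_lt _ (hv ▸ z.pos)
    rw [← List.rotate_mod, List.head?_rotate ht, List.getElem?_ofFn]
    simp only [hv] at ht ⊢
    rw [dif_pos ht, (hmod _ _).2 ((Nat.mod_modEq t _).add_right 1)]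
  have hrank : IsRotationRank v r := IsRotationRank.of_lt_iff hv hrecur (fun s t => (hmod s t).1)
    ha fun s t => by rw [← hσr s, ← hσr t, hσ.lt_iff]
  refine ⟨v, hrank.primitive, List.ext_getElem? fun i => ?_⟩
  rcases lt_or_ge i w.length with hi | hi
  · obtain ⟨k, hk⟩ := hrecur 1 ⟨i, hi⟩
    rw [show i = r (k + 1) by rw [add_comm, hk], hrank.getElem?_bwt, getLast?_rotate_succ, ha,
      List.getElem?_eq_getElem]
    rfl
  · rw [List.getElem?_eq_none (by rw [length_bwt, hv]; exact hi), List.getElem?_eq_none hi]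

end StandardPermutation

theorem statement_0_general {α : Type*} [LinearOrder α] (w : List α)
    (σ : Equiv.Perm (Fin w.length)) (hσ : IsStdPerm w σ) :
    (∃ v : List α, Primitive v ∧ bwt v = w) ↔ PermCyclic σ := by
  constructor
  · rintro ⟨v, hv, rfl⟩
    exact hv.permCyclic_of_isStdPerm_bwt hσ
  · exact hσ.exists_primitive_bwt_eq_of_permCyclic

/-- A word `w` over a finite ordered alphabet is the Burrows–Wheeler
transform of a primitive word if and only if its standard permutation `σ_w` is cyclic. -/
theorem statement_0 {α : Type*} [LinearOrder α] [Fintype α] (w : List α)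
    (σ : Equiv.Perm (Fin w.length)) (hσ : IsStdPerm w σ) :
    (∃ v : List α, Primitive v ∧ bwt v = w) ↔ PermCyclic σ :=
  statement_0_general w σ hσ

end DollarBWT
end

section
/- Let w be a word of length n over a finite ordered alphabet Σ and let 1 ≤ i ≤ n. Then: (1) σ_1(1) = 1 and σ_1(j) = σ_w(j−1) + 1 for all 1 < j ≤ n+1; and (2) σ_{i+1} = (1, σ_i(i+1)) ∘ σ_i, i.e. the standard permutation σ_{i+1} is obtained from σ_i by composing with the single transposition exchanging 1 and σ_i(i+1). -/
namespace DollarBWT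

/-!
The standard permutation of a word is unique: two permutations of `Fin n` inducing the same
comparisons differ by an order automorphism of `Fin n`, which is the identity. In `dol w 1` the
sentinel is the first and the strictly smallest letter, so `σ_1` fixes `1` and is `σ_w` shifted
by one. Moving the sentinel one step to the right permutes the letters of `dol w i` by the
adjacent transposition `(i, i+1)`; as the sentinel is the unique smallest letter, this
reindexing respects the tie-breaking between equal letters, so `σ_{i+1} = σ_i ∘ (i, i+1)
= (σ_i(i), σ_i(i+1)) ∘ σ_i`, and `σ_i(i) = 1` because position `i` holds the sentinel.
-/

theorem _root_.Equiv.Perm.eq_of_forall_lt_iff {β : Type*} [LinearOrder β] [WellFoundedLT β]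
    {σ τ : Equiv.Perm β} (h : ∀ a b, σ a < σ b ↔ τ a < τ b) : σ = τ := by
  let e : β ≃o β :=
    { σ.symm.trans τ with
      map_rel_iff' := fun {a b} => by
        simpa [not_lt] using (h (σ.symm b) (σ.symm a)).not.symm }
  ext a
  simpa [e] using congr($(Subsingleton.elim e (OrderIso.refl β)) (σ a)).symm

theorem _root_.Fin.swap_lt_swap_iff {n : ℕ} {p q a b : Fin n} (hpq : (q : ℕ) = p + 1)
    (ha : a ≠ q) (hb : b ≠ q) : Equiv.swap p q a < Equiv.swap p q b ↔ a < b := by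
  simp only [Equiv.swap_apply_def, Fin.lt_def, ne_eq, Fin.ext_iff] at *
  split_ifs <;> omega

section StdPerm

variable {α : Type*} [LinearOrder α] {n : ℕ} {v v' : List α} {σ τ : Equiv.Perm (Fin n)}

theorem isStdPerm_iff (h : v.length = n) :
    IsStdPerm v σ ↔ ∀ a b : Fin n,
      σ a < σ b ↔ v[(a : ℕ)] < v[(b : ℕ)] ∨ v[(a : ℕ)] = v[(b : ℕ)] ∧ a < b := by
  simp [IsStdPerm, h]

theorem IsStdPerm.unique (hσ : IsStdPerm v σ) (hτ : IsStdPerm v τ) : σ = τ := by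
  obtain ⟨_, hσ⟩ := hσ
  obtain ⟨_, hτ⟩ := hτ
  exact Equiv.Perm.eq_of_forall_lt_iff fun a b => (hσ a b).trans (hτ a b).symm

theorem IsStdPerm.mul_right (hσ : IsStdPerm v σ) (h : v.length = n) (h' : v'.length = n)
    (π : Equiv.Perm (Fin n)) (hv : ∀ a : Fin n, v'[(a : ℕ)] = v[(π a : ℕ)])
    (hπ : ∀ a b : Fin n, v'[(a : ℕ)] = v'[(b : ℕ)] → (π a < π b ↔ a < b)) :
    IsStdPerm v' (σ * π) := by
  rw [isStdPerm_iff h] at hσ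
  rw [isStdPerm_iff h']
  intro a b
  rw [Equiv.Perm.mul_apply, Equiv.Perm.mul_apply, hσ, hv, hv]
  exact or_congr_right (and_congr_right fun hab => hπ a b ((hv a).trans (hab.trans (hv b).symm)))

theorem IsStdPerm.apply_eq_zero {σ : Equiv.Perm (Fin (n + 1))}
    (hσ : IsStdPerm v σ) (h : v.length = n + 1) (p : Fin (n + 1))
    (hp : ∀ a : Fin (n + 1), a ≠ p → v[(p : ℕ)] < v[(a : ℕ)]) : σ p = 0 := by
  rw [isStdPerm_iff h] at hσ
  by_contra hne
  have hmin : σ.symm 0 ≠ p := fun hp0 => hne (by rw [← hp0, Equiv.apply_symm_apply])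
  have := (hσ p (σ.symm 0)).2 (Or.inl (hp _ hmin))
  rw [Equiv.apply_symm_apply] at this
  exact Fin.not_lt_zero _ this

theorem IsStdPerm.map {β : Type*} [LinearOrder β] {f : α → β} (hf : StrictMono f)
    (hσ : IsStdPerm v σ) : IsStdPerm (v.map f) σ := by
  obtain ⟨h, hσ⟩ := hσ
  refine ⟨by rw [List.length_map, h], fun a b => ?_⟩
  simpa [hf.lt_iff_lt, hf.injective.eq_iff] using hσ a b

theorem IsStdPerm.cons (hσ : IsStdPerm v σ) {x : α} (hx : ∀ y ∈ v, x < y) :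
    IsStdPerm (x :: v) (Equiv.Perm.decomposeFin.symm (0, σ)) := by
  have h : v.length = n := hσ.1
  rw [isStdPerm_iff h] at hσ
  refine (isStdPerm_iff (by simp [h])).2 fun a b => ?_
  have hx' (k : Fin n) : x < v[(k : ℕ)] := hx _ (List.getElem_mem _)
  cases a using Fin.cases <;> cases b using Fin.cases <;>
    simp [Equiv.Perm.decomposeFin_symm_apply_succ, Fin.succ_pos, hσ, hx', (hx' _).le]

end StdPerm

theorem ap_decomposeFin_symm_zero {n : ℕ} (σ : Equiv.Perm (Fin n)) (k : ℕ) :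
    ap (Equiv.Perm.decomposeFin.symm (0, σ)) (k + 1) = ap σ k + 1 := by
  rcases k with _ | m
  · simp [ap]
  · by_cases hm : m < n
    · have hsucc :
          (⟨m + 1 + 1 - 1, by omega⟩ : Fin (n + 1)) = Fin.succ ⟨m + 1 - 1, hm⟩ := rfl
      rw [ap, ap, dif_pos (by omega), dif_pos (by omega), hsucc,
        Equiv.Perm.decomposeFin_symm_apply_succ]
      simp
    · simp [ap, hm]

section Dol

variable {α : Type*} [LinearOrder α] (w : List α) {i : ℕ}

-- The coercion in `dol` elaborates as a monadic lift of the list, not as `List.map`.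
theorem dol_eq_insertIdx : dol w i = (w.map ((↑) : α → WithBot α)).insertIdx (i - 1) ⊥ := by
  simp [dol, List.map_eq_flatMap]

theorem dol_length (hi : i ≤ w.length + 1) : (dol w i).length = w.length + 1 := by
  simp [dol_eq_insertIdx, List.length_insertIdx]
  omega

theorem dol_one : dol w 1 = ⊥ :: w.map ((↑) : α → WithBot α) := by
  simp [dol_eq_insertIdx]

theorem dol_getElem_eq_bot_iff {j : ℕ} (hj : j < (dol w i).length) :
    (dol w i)[j] = ⊥ ↔ j = i - 1 := by
  simp only [dol_eq_insertIdx, List.getElem_insertIdx, List.getElem_map]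
  split_ifs <;> simp <;> omega

theorem dol_succ_getElem (h1 : 1 ≤ i) (h2 : i ≤ w.length) (a : Fin (w.length + 1)) :
    (dol w (i + 1))[(a : ℕ)]'(by rw [dol_length w (by omega)]; exact a.isLt) =
      (dol w i)[(Equiv.swap (⟨i - 1, by omega⟩ : Fin (w.length + 1))
        ⟨i, Nat.lt_succ_of_le h2⟩ a : ℕ)]'(by rw [dol_length w (by omega)]; omega) := by
  have hswap : ((Equiv.swap (⟨i - 1, by omega⟩ : Fin (w.length + 1))
      ⟨i, Nat.lt_succ_of_le h2⟩ a : Fin _) : ℕ) =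
        if (a : ℕ) = i - 1 then i else if (a : ℕ) = i then i - 1 else a := by
    simp only [Equiv.swap_apply_def, Fin.ext_iff]
    split_ifs <;> simp_all
  simp only [hswap, dol_eq_insertIdx, List.getElem_insertIdx, List.getElem_map]
  split_ifs <;> first | rfl | omega | simp_all

theorem IsStdPerm.dol_sentinel_eq_zero (hi : i ≤ w.length + 1)
    {σ : Equiv.Perm (Fin (w.length + 1))} (hσ : IsStdPerm (dol w i) σ) :
    σ ⟨i - 1, by omega⟩ = 0 :=
  hσ.apply_eq_zero (dol_length w hi) _ fun a ha => by
    rw [(dol_getElem_eq_bot_iff w _).2 rfl, bot_lt_iff_ne_bot, Ne, dol_getElem_eq_bot_iff]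
    exact fun h => ha (Fin.ext h)

theorem IsStdPerm.dol_succ (h1 : 1 ≤ i) (h2 : i ≤ w.length)
    {σ : Equiv.Perm (Fin (w.length + 1))} (hσ : IsStdPerm (dol w i) σ) :
    IsStdPerm (dol w (i + 1))
      (σ * Equiv.swap ⟨i - 1, by omega⟩ ⟨i, Nat.lt_succ_of_le h2⟩) := by
  set q : Fin (w.length + 1) := ⟨i, Nat.lt_succ_of_le h2⟩
  have hsentinel (c : Fin (w.length + 1)) :
      (dol w (i + 1))[(c : ℕ)]'(by rw [dol_length w (by omega)]; exact c.isLt) = ⊥ ↔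
        c = q := by
    rw [dol_getElem_eq_bot_iff, Fin.ext_iff]
    rfl
  refine hσ.mul_right (dol_length w (by omega)) (dol_length w (by omega)) _
    (dol_succ_getElem w h1 h2) fun a b hab => ?_
  by_cases haq : a = q
  · obtain rfl : b = q := (hsentinel b).1 (hab ▸ (hsentinel a).2 haq)
    simp [haq]
  · have hbq : b ≠ q := fun hbq => haq ((hsentinel a).1 (hab ▸ (hsentinel b).2 hbq))
    exact Fin.swap_lt_swap_iff (by simp [q]; omega) haq hbq

end Dol

/-- (1) `σ_1(1) = 1` and `σ_1(j) = σ_w(j−1) + 1` for `1 < j ≤ n+1`;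
(2) `σ_{i+1} = (1, σ_i(i+1)) ∘ σ_i` for `1 ≤ i ≤ n`, i.e. `σ_{i+1}` is obtained from
`σ_i` by composing with the transposition exchanging `1` and `σ_i(i+1)`. -/
theorem statement_4 {α : Type*} [LinearOrder α] (w : List α) (i : ℕ)
    (h1 : 1 ≤ i) (h2 : i ≤ w.length)
    (σ : Equiv.Perm (Fin w.length)) (hσ : IsStdPerm w σ)
    (σ1 : Equiv.Perm (Fin (w.length + 1))) (hσ1 : IsStdPerm (dol w 1) σ1)
    (σi : Equiv.Perm (Fin (w.length + 1))) (hσi : IsStdPerm (dol w i) σi)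
    (σi1 : Equiv.Perm (Fin (w.length + 1))) (hσi1 : IsStdPerm (dol w (i + 1)) σi1) :
    (ap σ1 1 = 1 ∧ ∀ j : ℕ, 1 < j → j ≤ w.length + 1 → ap σ1 j = ap σ (j - 1) + 1) ∧
    σi1 = Equiv.swap (⟨0, by omega⟩ : Fin (w.length + 1)) (σi ⟨i, by omega⟩) * σi := by
  have hσ1_eq : σ1 = Equiv.Perm.decomposeFin.symm (0, σ) := by
    refine hσ1.unique ?_
    rw [dol_one]
    refine (hσ.map WithBot.coe_strictMono).cons fun y hy => ?_
    obtain ⟨a, -, rfl⟩ := List.mem_map.1 hy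
    exact WithBot.bot_lt_coe a
  have hσi1_eq : σi1 = σi * Equiv.swap ⟨i - 1, by omega⟩ ⟨i, Nat.lt_succ_of_le h2⟩ :=
    hσi1.unique (hσi.dol_succ w h1 h2)
  refine ⟨⟨?_, fun j hj _ => ?_⟩, ?_⟩
  · simp [hσ1_eq, ap]
  · obtain ⟨k, rfl⟩ : ∃ k, j = k + 1 := ⟨j - 1, by omega⟩
    rw [hσ1_eq, ap_decomposeFin_symm_zero, Nat.add_sub_cancel]
  · rw [hσi1_eq, Equiv.mul_swap_eq_swap_mul, hσi.dol_sentinel_eq_zero w (by omega)]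
    rfl

end DollarBWT
end

section
/- Let v be a word over a finite ordered alphabet Σ and let w = BWT(v$). If the second character of w is $ (i.e. w_2 = $), then v is a Lyndon word. -/
namespace List

variable {α β : Type*}

theorem append_lt_append_iff_of_length_eq [LT α] {t x p q : List α}
    (h : t.length = x.length) : t ++ p < x ++ q ↔ t < x ∨ t = x ∧ p < q := by
  induction t generalizing x with
  | nil =>
    cases x with
    | nil => simp
    | cons => simp at h
  | cons a t ih =>
    cases x with
    | nil => simp at h
    | cons b x =>
      simp only [cons_append, cons_lt_cons_iff, ih (Nat.succ_injective h), cons.injEq]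
      tauto

theorem lt_of_map_lt_map [LinearOrder α] [LinearOrder β] {f : α → β} (hf : StrictMono f)
    {l₁ l₂ : List α} (h : l₁.map f < l₂.map f) : l₁ < l₂ :=
  match lt_trichotomy l₁ l₂ with
  | .inl hlt => hlt
  | .inr (.inl rfl) => absurd h (List.lt_irrefl _)
  | .inr (.inr hgt) => absurd (List.map_lt (fun _ _ hab => hf hab) hgt) (List.lt_asymm h)

theorem getElem?_filterMap_of_forall_isSome {f : α → Option β} :
    ∀ {l : List α}, (∀ x ∈ l, (f x).isSome) → ∀ i : ℕ, (l.filterMap f)[i]? = l[i]?.bind f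
  | [], _, i => by simp
  | a :: l, h, i => by
    obtain ⟨b, hb⟩ := Option.isSome_iff_exists.1 (h a mem_cons_self)
    have ih := getElem?_filterMap_of_forall_isSome (l := l) (fun x hx => h x (mem_cons_of_mem a hx))
    cases i <;> simp [hb, ih]

theorem Pairwise.le_of_getElem?_one_eq [Preorder α] {L : List α} (hL : L.Pairwise (· ≤ ·))
    {x y b : α} (hx : x ∈ L) (hy : y ∈ L) (hxy : x < y) (hb : L[1]? = some b) : b ≤ y := by
  obtain _ | ⟨a, _ | ⟨b', L⟩⟩ := L
  · simp at hb
  · simp at hb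
  · simp only [getElem?_cons_succ, getElem?_cons_zero, Option.some.injEq] at hb
    subst hb
    simp only [pairwise_cons, mem_cons] at hL hx hy
    obtain rfl | rfl | hy := hy
    · obtain rfl | rfl | hx := hx
      · exact absurd hxy (lt_irrefl _)
      · exact absurd hxy (not_lt_of_ge (hL.1 _ (Or.inl rfl)))
      · exact absurd hxy (not_lt_of_ge (hL.1 _ (Or.inr hx)))
    · exact le_rfl
    · exact hL.2.1 _ hy

end List

namespace DollarBWT

section

variable {β : Type*}

theorem mem_rotations_s8 {u r : List β} : r ∈ rotations u ↔ ∃ j < u.length, u.rotate j = r := by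
  simp [rotations]

theorem getElem?_bwt [LinearOrder β] {u : List β} (hu : u ≠ []) (i : ℕ) :
    (bwt u)[i]? = ((rotations u).insertionSort (· ≤ ·))[i]?.bind List.getLast? := by
  refine List.getElem?_filterMap_of_forall_isSome (fun r hr => ?_) i
  obtain ⟨j, -, rfl⟩ := mem_rotations_s8.1 ((List.perm_insertionSort _ _).mem_iff.1 hr)
  simpa using hu

theorem rotate_append_singleton {v : List β} {c : β} {k : ℕ} (hk : k ≤ v.length) :
    (v ++ [c]).rotate k = v.drop k ++ c :: v.take k := by
  rw [List.rotate_eq_drop_append_take (by simp; omega), List.drop_append_of_le_length hk,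
    List.take_append_of_le_length hk]
  simp

theorem eq_of_mem_rotations_of_getLast? {v r : List β} {c : β} (hc : c ∉ v)
    (hr : r ∈ rotations (v ++ [c])) (hlast : r.getLast? = some c) : r = v ++ [c] := by
  obtain ⟨j, hj, rfl⟩ := mem_rotations_s8.1 hr
  obtain rfl | hj₀ := Nat.eq_zero_or_pos j
  · exact List.rotate_zero _
  simp only [List.length_append, List.length_singleton] at hj
  have htake : v.take j ≠ [] := by rw [← List.length_pos_iff, List.length_take]; omega
  rw [rotate_append_singleton (by omega), List.getLast?_append_of_ne_nil _ (by simp),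
    List.getLast?_cons, List.getLast?_eq_some_getLast htake] at hlast
  simp only [Option.getD_some, Option.some.injEq] at hlast
  exact absurd (hlast ▸ List.mem_of_mem_take (List.getLast_mem htake)) hc

theorem cons_lt_rotate_append_singleton [LinearOrder β] {v : List β} {c : β}
    (hc : ∀ e ∈ v, c < e) {k : ℕ} (hk : k < v.length) : c :: v < (v ++ [c]).rotate k := by
  rw [rotate_append_singleton hk.le, List.drop_eq_getElem_cons hk]
  exact List.Lex.rel (hc _ (List.getElem_mem hk))

theorem lt_rotate_of_append_le_rotate [LinearOrder β] {v : List β} {c : β}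
    (hc : ∀ e ∈ v, c < e) {k : ℕ} (hk₀ : 0 < k) (hk : k ≤ v.length)
    (hle : v ++ [c] ≤ (v ++ [c]).rotate k) : v < v.rotate k := by
  set m := v.length - k
  have hlen : (v.take m).length = (v.drop k).length := by simp; omega
  have hv : v ++ [c] = v.take m ++ (v.drop m ++ [c]) := by
    rw [← List.append_assoc, List.take_append_drop]
  rw [rotate_append_singleton hk, hv] at hle
  have hprefix : v.take m < v.drop k := by
    by_contra! hge
    obtain hgt | heq := hge.lt_or_eq
    · exact not_lt_of_ge hle ((List.append_lt_append_iff_of_length_eq hlen.symm).2 (Or.inl hgt))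
    · obtain ⟨e, z, hz⟩ := List.exists_cons_of_ne_nil (show v.drop m ≠ [] by simp; omega)
      refine not_lt_of_ge hle ((List.append_lt_append_iff_of_length_eq hlen.symm).2
        (Or.inr ⟨heq, ?_⟩))
      rw [hz]
      exact List.Lex.rel (hc e (List.mem_of_mem_drop (hz ▸ List.mem_cons_self)))
  have hlt := (List.append_lt_append_iff_of_length_eq hlen (p := v.drop m) (q := v.take k)).2
    (Or.inl hprefix)
  rwa [List.take_append_drop, ← List.rotate_eq_drop_append_take hk] at hlt

theorem append_singleton_le_rotate_of_getElem?_bwt [LinearOrder β] {v : List β} {c : β}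
    (hc : ∀ e ∈ v, c < e) (hbwt : (bwt (v ++ [c]))[1]? = some c) {k : ℕ} (hk : k < v.length) :
    v ++ [c] ≤ (v ++ [c]).rotate k := by
  have hsort {r} := (List.perm_insertionSort (· ≤ ·) (rotations (v ++ [c]))).mem_iff (a := r)
  obtain ⟨r, hr, hlast⟩ := Option.bind_eq_some_iff.1 ((getElem?_bwt (by simp) 1).symm.trans hbwt)
  obtain rfl : r = v ++ [c] := eq_of_mem_rotations_of_getLast? (fun h => lt_irrefl c (hc c h))
    (hsort.1 (List.mem_of_getElem? hr)) hlast
  exact (List.pairwise_insertionSort _ _).le_of_getElem?_one_eq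
    (hsort.2 (mem_rotations_s8.2 ⟨v.length, by simp, List.rotate_append_length_eq _ _⟩))
    (hsort.2 (mem_rotations_s8.2 ⟨k, by simp; omega, rfl⟩))
    (cons_lt_rotate_append_singleton hc hk) hr

theorem lt_rotate_of_getElem?_bwt [LinearOrder β] {v : List β} {c : β}
    (hc : ∀ e ∈ v, c < e) (hbwt : (bwt (v ++ [c]))[1]? = some c) {k : ℕ} (hk₀ : 0 < k)
    (hk : k < v.length) : v < v.rotate k :=
  lt_rotate_of_append_le_rotate hc hk₀ hk.le (append_singleton_le_rotate_of_getElem?_bwt hc hbwt hk)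

end

-- The coercion of a list to `List (WithBot α)` elaborates through the list monad.
theorem map_coe_eq_map_some {α : Type*} (v : List α) :
    v.map (fun a => (a : WithBot α)) = v.map WithBot.some := by
  simp [List.map_eq_flatMap]

theorem statement_8_general {α : Type*} [LinearOrder α] (v : List α)
    (h2 : (bwt (v.map (fun a => (a : WithBot α)) ++ [(⊥ : WithBot α)]))[1]? =
      some (⊥ : WithBot α)) :
    ∀ k : ℕ, k < v.length → v.rotate k ≠ v → v < v.rotate k := by
  intro k hk hne
  rw [map_coe_eq_map_some] at h2
  have hk₀ : 0 < k := Nat.pos_of_ne_zero (by rintro rfl; exact hne v.rotate_zero)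
  have hlt := lt_rotate_of_getElem?_bwt (by simp [WithBot.bot_lt_coe]) h2 hk₀ (by simpa using hk)
  rw [← List.map_rotate] at hlt
  exact List.lt_of_map_lt_map WithBot.coe_strictMono hlt

/-- If `w = BWT(v$)` and the second character of `w` is `$`,
then `v` is a Lyndon word (strictly smaller than each of its conjugates distinct
from itself). -/
theorem statement_8 {α : Type*} [LinearOrder α] [Fintype α] (v : List α)
    (h2 : (bwt (v.map (fun a => (a : WithBot α)) ++ [(⊥ : WithBot α)]))[1]? =
      some (⊥ : WithBot α)) :
    ∀ k : ℕ, k < v.length → v.rotate k ≠ v → v < v.rotate k :=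
  statement_8_general v h2

end DollarBWT
end
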